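/- arXiv:1612.05551 — 4 statements merged into one kernel-verified Lean document; each statement's English description precedes it below -/
import Mathlib

section
/- Define φ₀(0) = 1/β₁ and φ_k(0) = (-1)^k (1/β_{k+1}) ∏_{j=1}^k (α_j/β_j), and define ψ₀(0) = 1/(α₁β₁) and ψ_k(0) = (1/α_{k+1})(φ_k(0) - β_{k+1} ψ_{k-1}(0)). If all α_j > 0 and β_j > 0, then φ_k(0) and ψ_k(0) have the same sign for every k ≥ 0; in particular φ_k(0)⁻¹ ψ_k(0) > 0. -/
open Finset

/-!
Multiplying by `(-1)^k` removes the alternating signs: `(-1)^k φ_k` is a product of positive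
factors, and the recursion becomes
`(-1)^(k+1) ψ_(k+1) = α_(k+2)⁻¹ ((-1)^(k+1) φ_(k+1) + β_(k+2) (-1)^k ψ_k)`,
a positive combination of positive numbers. Hence `φ_k⁻¹ ψ_k`, which is unchanged by the
common sign, is positive.
-/

lemma inv_mul_mul_mul_of_ne_zero {K : Type*} [Field K] {c : K} (hc : c ≠ 0) (x y : K) :
    (c * x)⁻¹ * (c * y) = x⁻¹ * y := by
  rw [mul_inv_rev, mul_assoc, inv_mul_cancel_left₀ hc]

lemma ne_zero_and_pos_iff_of_inv_mul_pos {K : Type*} [Field K] [LinearOrder K]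
    [IsStrictOrderedRing K] {x y : K} (h : 0 < x⁻¹ * y) : x ≠ 0 ∧ (0 < x ↔ 0 < y) := by
  refine ⟨?_, inv_pos.symm.trans (pos_iff_pos_of_mul_pos h)⟩
  rintro rfl
  simp at h

section Lanczos

variable {α β φ ψ : ℕ → ℝ} (hα : ∀ j, 0 < α j) (hβ : ∀ j, 0 < β j)

include hα hβ in
lemma neg_one_pow_mul_pos_of_eq_prod
    (hφ : ∀ k, φ k = (-1 : ℝ) ^ k * (1 / β (k + 1)) * ∏ j ∈ Icc 1 k, α j / β j) (k : ℕ) :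
    0 < (-1 : ℝ) ^ k * φ k := by
  have hsq : (-1 : ℝ) ^ k * (-1) ^ k = 1 := by rw [← mul_pow]; norm_num
  rw [hφ k, ← mul_assoc, ← mul_assoc, hsq, one_mul]
  exact mul_pos (one_div_pos.2 (hβ _)) (prod_pos fun j _ => div_pos (hα j) (hβ j))

include hα hβ in
lemma neg_one_pow_mul_pos_of_recursion (hφ : ∀ k, 0 < (-1 : ℝ) ^ k * φ k)
    (hψ0 : ψ 0 = 1 / (α 1 * β 1))
    (hψ : ∀ k, 1 ≤ k → ψ k = (1 / α (k + 1)) * (φ k - β (k + 1) * ψ (k - 1))) (k : ℕ) :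
    0 < (-1 : ℝ) ^ k * ψ k := by
  induction k with
  | zero =>
    rw [pow_zero, one_mul, hψ0]
    exact one_div_pos.2 (mul_pos (hα 1) (hβ 1))
  | succ n ih =>
    have hstep : (-1 : ℝ) ^ (n + 1) * ψ (n + 1) = (1 / α (n + 2)) *
        ((-1) ^ (n + 1) * φ (n + 1) + β (n + 2) * ((-1) ^ n * ψ n)) := by
      rw [hψ (n + 1) (Nat.le_add_left 1 n), Nat.add_sub_cancel]
      ring
    rw [hstep]
    have := hφ (n + 1)
    have := hα (n + 2)
    have := hβ (n + 2)
    positivity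

end Lanczos

/-- the constant terms `φ_k(0)` and `ψ_k(0)` of the Lanczos polynomials
have the same sign when all `α_j, β_j > 0`; in particular `φ_k(0)⁻¹ ψ_k(0) > 0`. -/
theorem phi_psi_same_sign
    (α β : ℕ → ℝ) (hα : ∀ j, 0 < α j) (hβ : ∀ j, 0 < β j)
    (φ ψ : ℕ → ℝ)
    (hφ : ∀ k, φ k = (-1 : ℝ) ^ k * (1 / β (k + 1)) * ∏ j ∈ Finset.Icc 1 k, α j / β j)
    (hψ0 : ψ 0 = 1 / (α 1 * β 1))
    (hψ : ∀ k, 1 ≤ k → ψ k = (1 / α (k + 1)) * (φ k - β (k + 1) * ψ (k - 1))) :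
    ∀ k, (φ k ≠ 0 ∧ (0 < φ k ↔ 0 < ψ k)) ∧ 0 < (φ k)⁻¹ * ψ k := by
  intro k
  have hφ_signed := neg_one_pow_mul_pos_of_eq_prod hα hβ hφ
  have hψ_signed := neg_one_pow_mul_pos_of_recursion hα hβ hφ_signed hψ0 hψ k
  have hratio : 0 < (φ k)⁻¹ * ψ k := by
    rw [← inv_mul_mul_mul_of_ne_zero (pow_ne_zero k (neg_ne_zero.2 one_ne_zero))]
    exact mul_pos (inv_pos.2 (hφ_signed k)) hψ_signed
  exact ⟨ne_zero_and_pos_iff_of_inv_mul_pos hratio, hratio⟩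
end

section
/- Let L_{k+} ∈ ℝ^{(k+1)×k} be lower bidiagonal with nonzero diagonal entries α₁,…,α_k, subdiagonal entries β₂,…,β_{k+1}, and let β₁ > 0. Let y_k minimize ‖β₁e₁ − L_{k+}y‖ and set p_k = β₁e₁ − L_{k+}y_k. Then p_k = c_k (φ₀(0), φ₁(0), …, φ_k(0))ᵀ with c_k = 1/∑_{l=0}^k φ_l(0)², where φ_l(0) = (-1)^l (1/β_{l+1}) ∏_{j=1}^l (α_j/β_j), and consequently ‖p_k‖ = (∑_{l=0}^k φ_l(0)²)^{-1/2}. -/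
open Finset Matrix

/-- Euclidean norm of a finite real vector. -/
noncomputable def vecEnorm {ι : Type*} [Fintype ι] (v : ι → ℝ) : ℝ :=
  Real.sqrt (∑ i, v i ^ 2)

/-- Constant term `φ_l(0) = (-1)^l (1/β_{l+1}) ∏_{j=1}^l (α_j/β_j)` of the Lanczos polynomial. -/
noncomputable def phi (α β : ℕ → ℝ) (l : ℕ) : ℝ :=
  (-1 : ℝ) ^ l * (β (l + 1))⁻¹ * ∏ j ∈ Finset.Icc 1 l, α j / β j

lemma phi_rec (α β : ℕ → ℝ) (l : ℕ) (hb : β (l+2) ≠ 0) :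
    β (l+2) * phi α β (l+1) + α (l+1) * phi α β l = 0 := by
  unfold phi
  rw [Finset.prod_Icc_succ_top (by omega : 1 ≤ l+1)]
  linear_combination ((-1:ℝ)^(l+1) * (∏ j ∈ Finset.Icc 1 l, α j / β j) *
    (α (l+1) / β (l+1))) * mul_inv_cancel₀ hb

/-- the LSQR projected residual `p_k = β₁e₁ - L_{k+}y_k` satisfies
`p_k = c_k (φ₀(0),…,φ_k(0))ᵀ` with `c_k = 1/∑ φ_l(0)²`, and
`‖p_k‖ = (∑ φ_l(0)²)^{-1/2}`. -/
theorem lsqr_projected_residual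
    (k : ℕ) (α β : ℕ → ℝ)
    (hα : ∀ i, 1 ≤ i → i ≤ k → α i ≠ 0)
    (hβ : ∀ i, 1 ≤ i → i ≤ k + 1 → β i ≠ 0)
    (hβ₁ : 0 < β 1)
    (Lp : Matrix (Fin (k + 1)) (Fin k) ℝ)
    (hLp : ∀ (i : Fin (k + 1)) (j : Fin k), Lp i j =
      if i.1 = j.1 then α (i.1 + 1)
      else if i.1 = j.1 + 1 then β (i.1 + 1)
      else 0)
    (y : Fin k → ℝ)
    (hy : ∀ y' : Fin k → ℝ,
      vecEnorm (β 1 • (Pi.single 0 1 : Fin (k + 1) → ℝ) - Lp.mulVec y) ≤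
      vecEnorm (β 1 • (Pi.single 0 1 : Fin (k + 1) → ℝ) - Lp.mulVec y'))
    (p : Fin (k + 1) → ℝ)
    (hp : p = β 1 • (Pi.single 0 1 : Fin (k + 1) → ℝ) - Lp.mulVec y) :
    (∀ l : Fin (k + 1),
      p l = (∑ j ∈ Finset.range (k + 1), phi α β j ^ 2)⁻¹ * phi α β l.1) ∧
    vecEnorm p = (Real.sqrt (∑ j ∈ Finset.range (k + 1), phi α β j ^ 2))⁻¹ := by
  set S := ∑ j ∈ Finset.range (k + 1), phi α β j ^ 2 with hSdef
  have hβ1 : β 1 ≠ 0 := hβ₁.ne'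
  have hphi0 : phi α β 0 = (β 1)⁻¹ := by simp [phi]
  have hS0 : 0 < S := by
    have h0 : (0:ℕ) ∈ Finset.range (k+1) := by simp
    have h1 : 0 < phi α β 0 ^ 2 := by
      rw [hphi0]
      have : (β 1)⁻¹ ≠ 0 := inv_ne_zero hβ1
      positivity
    exact lt_of_lt_of_le h1 (Finset.single_le_sum (f := fun j => phi α β j ^ 2)
      (fun i _ => sq_nonneg _) h0)
  -- column sums
  have hcol : ∀ (j : Fin k) (v : Fin (k+1) → ℝ),
      ∑ i, Lp i j * v i =
        α (j.1+1) * v ⟨j.1, by omega⟩ + β (j.1+2) * v ⟨j.1+1, by omega⟩ := by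
    intro j v
    have key : ∀ i : Fin (k+1), Lp i j * v i =
        (if i = (⟨j.1, by omega⟩ : Fin (k+1)) then α (j.1+1) * v i else 0) +
        (if i = (⟨j.1+1, by omega⟩ : Fin (k+1)) then β (j.1+2) * v i else 0) := by
      intro i
      rw [hLp]
      rcases eq_or_ne i.1 j.1 with h1 | h1
      · have hi : i = ⟨j.1, by omega⟩ := Fin.ext h1
        have h2 : ¬ (i = (⟨j.1+1, by omega⟩ : Fin (k+1))) := by
          intro h
          have h' : i.1 = j.1 + 1 := congrArg Fin.val h
          omega
        simp [h1, hi, h2]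
      · rcases eq_or_ne i.1 (j.1+1) with h2 | h2
        · have hi : i = ⟨j.1+1, by omega⟩ := Fin.ext h2
          have h3 : ¬ (i = (⟨j.1, by omega⟩ : Fin (k+1))) := by
            intro h
            have h' : i.1 = j.1 := congrArg Fin.val h
            omega
          simp [h1, h2, hi, h3]
        · have h3 : ¬ (i = (⟨j.1, by omega⟩ : Fin (k+1))) := by
            intro h
            have h' : i.1 = j.1 := congrArg Fin.val h
            omega
          have h4 : ¬ (i = (⟨j.1+1, by omega⟩ : Fin (k+1))) := by
            intro h
            have h' : i.1 = j.1 + 1 := congrArg Fin.val h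
            omega
          simp [h1, h2, h3, h4]
    simp_rw [key]
    rw [Finset.sum_add_distrib]
    simp [Finset.sum_ite_eq']
  -- orthogonality of p to the columns of Lp
  have horth : ∀ j : Fin k, ∑ i, Lp i j * p i = 0 := by
    intro j
    set c := ∑ i, Lp i j * p i with hc
    set d := ∑ i, (Lp i j)^2 with hd
    have hdpos : 0 < d := by
      have hj : Lp ⟨j.1, by omega⟩ j = α (j.1+1) := by
        rw [hLp]
        show (if j.1 = j.1 then α (j.1 + 1) else if j.1 = j.1+1 then β (j.1+1) else 0)
          = α (j.1+1)
        simp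
      have h1 : (Lp ⟨j.1, by omega⟩ j)^2 ≤ d :=
        Finset.single_le_sum (f := fun i => (Lp i j)^2) (fun i _ => sq_nonneg _)
          (Finset.mem_univ _)
      have h2 : 0 < (Lp ⟨j.1, by omega⟩ j)^2 := by
        rw [hj]
        have := hα (j.1+1) (by omega) (by omega)
        positivity
      linarith
    have hineq : ∀ t : ℝ, 0 ≤ t^2*d - 2*t*c := by
      intro t
      have hmv : ∀ i, Lp.mulVec (y + t • (Pi.single j 1 : Fin k → ℝ)) i = Lp.mulVec y i + t * Lp i j := by
        intro i
        simp only [Matrix.mulVec, dotProduct, Pi.add_apply, Pi.smul_apply, smul_eq_mul,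
          mul_add]
        rw [Finset.sum_add_distrib]
        congr 1
        have : ∀ j' : Fin k, Lp i j' * (t * (Pi.single j 1 : Fin k → ℝ) j') =
            if j' = j then t * Lp i j' else 0 := by
          intro j'
          rcases eq_or_ne j' j with h | h
          · subst h; simp [Pi.single_apply]; ring
          · simp [Pi.single_apply, h]
        simp_rw [this]
        simp [Finset.sum_ite_eq']
      have hres : β 1 • (Pi.single 0 1 : Fin (k+1) → ℝ) - Lp.mulVec (y + t • (Pi.single j 1 : Fin k → ℝ))
          = fun i => p i - t * Lp i j := by
        funext i
        simp only [Pi.sub_apply, Pi.smul_apply, smul_eq_mul, hmv i, hp]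
        ring
      have h := hy (y + t • (Pi.single j 1 : Fin k → ℝ))
      rw [hres, ← hp] at h
      have hsum : ∑ i, p i ^2 ≤ ∑ i, (p i - t * Lp i j)^2 := by
        have := (Real.sqrt_le_sqrt_iff (by positivity)).mp h
        simpa [vecEnorm] using this
      have hexp : ∑ i, (p i - t * Lp i j)^2 = ∑ i, p i^2 - 2*t*c + t^2*d := by
        rw [hc, hd, Finset.mul_sum, Finset.mul_sum, ← Finset.sum_sub_distrib,
          ← Finset.sum_add_distrib]
        apply Finset.sum_congr rfl
        intro i _
        ring
      linarith
    by_contra hc0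
    have h1 := hineq (c/d)
    have h2 : (c/d)^2*d - 2*(c/d)*c = -(c^2/d) := by
      field_simp
      ring
    rw [h2] at h1
    have h3 : 0 < c^2/d := div_pos (by positivity) hdpos
    linarith
  -- recurrence for p
  have hpr : ∀ j : Fin k,
      α (j.1+1) * p ⟨j.1, by omega⟩ + β (j.1+2) * p ⟨j.1+1, by omega⟩ = 0 := by
    intro j
    rw [← hcol j p]
    exact horth j
  set c0 := β 1 * p ⟨0, Nat.succ_pos k⟩ with hc0
  have hrat : ∀ l, ∀ h : l < k + 1, p ⟨l, h⟩ = c0 * phi α β l := by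
    intro l
    induction l with
    | zero =>
      intro h
      rw [hphi0, hc0]
      field_simp
    | succ n ih =>
      intro h
      have hn : n < k + 1 := by omega
      have hnk : n < k := by omega
      have hb2 : β (n+2) ≠ 0 := hβ (n+2) (by omega) (by omega)
      have h1 := hpr ⟨n, hnk⟩
      have h2 := phi_rec α β n hb2
      have h3 := ih hn
      have key : β (n+2) * p ⟨n+1, h⟩ = β (n+2) * (c0 * phi α β (n+1)) := by
        linear_combination h1 - α (n+1) * h3 - c0 * h2
      exact mul_left_cancel₀ hb2 key
  -- inner product with phi vector equals 1
  have hinner : ∑ i : Fin (k+1), phi α β i.1 * p i = 1 := by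
    rw [hp]
    have hsplit : ∑ i : Fin (k+1), phi α β i.1 *
        (β 1 • (Pi.single 0 1 : Fin (k+1) → ℝ) - Lp.mulVec y) i
        = (∑ i : Fin (k+1), phi α β i.1 * (β 1 • (Pi.single 0 1 : Fin (k+1) → ℝ)) i)
          - ∑ i : Fin (k+1), phi α β i.1 * Lp.mulVec y i := by
      rw [← Finset.sum_sub_distrib]
      apply Finset.sum_congr rfl
      intro i _
      simp only [Pi.sub_apply]
      ring
    rw [hsplit]
    have h1 : ∑ i : Fin (k+1), phi α β i.1 * (β 1 • (Pi.single 0 1 : Fin (k+1) → ℝ)) i = 1 := by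
      have : ∀ i : Fin (k+1), phi α β i.1 * (β 1 • (Pi.single 0 1 : Fin (k+1) → ℝ)) i =
          if i = (0 : Fin (k+1)) then β 1 * phi α β i.1 else 0 := by
        intro i
        rcases eq_or_ne i (0 : Fin (k+1)) with h | h
        · subst h; simp; ring
        · simp [Pi.single_apply, h]
      simp_rw [this]
      rw [Finset.sum_ite_eq' Finset.univ (0 : Fin (k+1))]
      simp [hphi0]
      field_simp
    have h2 : ∑ i : Fin (k+1), phi α β i.1 * Lp.mulVec y i = 0 := by
      have step : ∑ i : Fin (k+1), phi α β i.1 * Lp.mulVec y i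
          = ∑ j, (∑ i, Lp i j * phi α β i.1) * y j := by
        simp only [Matrix.mulVec, dotProduct]
        simp_rw [Finset.mul_sum]
        rw [Finset.sum_comm]
        apply Finset.sum_congr rfl
        intro j _
        rw [Finset.sum_mul]
        apply Finset.sum_congr rfl
        intro i _
        ring
      rw [step]
      apply Finset.sum_eq_zero
      intro j _
      rw [hcol j (fun i => phi α β i.1)]
      have hrec := phi_rec α β j.1 (hβ (j.1+2) (by omega) (by omega))
      have hval : (α (j.1+1) * phi α β j.1 + β (j.1+2) * phi α β (j.1+1)) = 0 := by
        linarith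
      calc (α (j.1+1) * phi α β (⟨j.1, by omega⟩ : Fin (k+1)).1
            + β (j.1+2) * phi α β (⟨j.1+1, by omega⟩ : Fin (k+1)).1) * y j
          = (α (j.1+1) * phi α β j.1 + β (j.1+2) * phi α β (j.1+1)) * y j := rfl
        _ = 0 := by rw [hval]; ring
    rw [h1, h2]
    ring
  -- c0 * S = 1
  have hsum1 : c0 * S = 1 := by
    rw [← hinner, hSdef, ← Fin.sum_univ_eq_sum_range (fun j => phi α β j ^ 2) (k+1),
      Finset.mul_sum]
    apply Finset.sum_congr rfl
    intro i _
    have hr := hrat i.1 i.2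
    simp only [Fin.eta] at hr
    rw [hr]
    ring
  have hc0S : c0 = S⁻¹ := (inv_eq_of_mul_eq_one_left hsum1).symm
  have hfirst : ∀ l : Fin (k + 1), p l = S⁻¹ * phi α β l.1 := by
    intro l
    have hr := hrat l.1 l.2
    simp only [Fin.eta] at hr
    rw [hr, hc0S]
  refine ⟨hfirst, ?_⟩
  have hfs : ∑ i : Fin (k+1), p i ^ 2 = S⁻¹ := by
    have : ∀ i : Fin (k+1), p i ^2 = S⁻¹^2 * phi α β i.1 ^2 := by
      intro i; rw [hfirst i]; ring
    simp_rw [this]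
    rw [← Finset.mul_sum, Fin.sum_univ_eq_sum_range (fun j => phi α β j ^ 2) (k+1), ← hSdef,
      sq, mul_assoc, inv_mul_cancel₀ hS0.ne', mul_one]
  rw [vecEnorm, hfs, Real.sqrt_inv]
end

section
/- Let A ∈ ℝ^{m×n}, b ∈ ℝ^m, and suppose the sequences (s_k), (w_k) and positive scalars α_k, β_k satisfy the Golub-Kahan recurrences: β₁ s₁ = b, α_k w_k = Aᵀ s_k − β_k w_{k-1}, β_{k+1} s_{k+1} = A w_k − α_k s_k (with w₀ = 0). Then for every k ≥ 0 there exist polynomials φ_k of degree k with s_{k+1} = φ_k(AAᵀ) b, and the constant term of φ_k satisfies φ_k(0) = (-1)^k (1/β_{k+1}) ∏_{j=1}^k (α_j/β_j). -/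
/-!
Both Golub–Kahan sequences are polynomial in `M = A Aᵀ` applied to `b`: by induction,
`s (k + 1) = φ_k(M) b` and `w k = Aᵀ χ_k(M) b`, where the recurrences themselves define
`χ_{k+1} = (φ_k - β_{k+1} χ_k) / α_{k+1}` and `φ_{k+1} = (X χ_{k+1} - α_{k+1} φ_k) / β_{k+2}`.
Only the `X χ_{k+1}` term raises the degree, so `deg φ_k = k` and `deg χ_k < k`; and since
that term vanishes at `0`, each step multiplies the constant term of `φ` by `-α_{k+1} / β_{k+2}`.
-/

open Finset Matrix Polynomial

namespace GolubKahan

variable {K : Type*} [Field K] (α β : ℕ → K)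

noncomputable def polys : ℕ → K[X] × K[X]
  | 0 => (C (β 1)⁻¹, 0)
  | k + 1 =>
    let χ := C (α (k + 1))⁻¹ * ((polys k).1 - C (β (k + 1)) * (polys k).2)
    (C (β (k + 2))⁻¹ * (X * χ - C (α (k + 1)) * (polys k).1), χ)

noncomputable def leftPoly (k : ℕ) : K[X] := (polys α β k).1

noncomputable def rightPoly (k : ℕ) : K[X] := (polys α β k).2

@[simp] lemma leftPoly_zero : leftPoly α β 0 = C (β 1)⁻¹ := rfl

@[simp] lemma rightPoly_zero : rightPoly α β 0 = 0 := rfl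

lemma rightPoly_succ (k : ℕ) : rightPoly α β (k + 1) =
    C (α (k + 1))⁻¹ * (leftPoly α β k - C (β (k + 1)) * rightPoly α β k) := rfl

lemma leftPoly_succ (k : ℕ) : leftPoly α β (k + 1) =
    C (β (k + 2))⁻¹ * (X * rightPoly α β (k + 1) - C (α (k + 1)) * leftPoly α β k) := rfl

lemma coeff_zero_leftPoly (k : ℕ) :
    (leftPoly α β k).coeff 0 = (-1) ^ k * (1 / β (k + 1)) * ∏ j ∈ Icc 1 k, α j / β j := by
  induction k with
  | zero => simp
  | succ k ih =>
    rw [leftPoly_succ, coeff_C_mul, coeff_sub, mul_coeff_zero, coeff_X_zero, coeff_C_mul, ih,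
      prod_Icc_succ_top (by omega)]
    ring

variable {α β}

lemma degree_leftPoly_and_rightPoly (hα : ∀ j, α j ≠ 0) (hβ : ∀ j, β j ≠ 0) (k : ℕ) :
    (leftPoly α β k).degree = k ∧ (rightPoly α β k).degree < k := by
  induction k with
  | zero => simp [hβ 1]
  | succ k ih =>
    obtain ⟨hφ, hχ⟩ := ih
    have hχ' : (rightPoly α β (k + 1)).degree = k := by
      rw [rightPoly_succ, degree_C_mul (inv_ne_zero (hα _)), degree_sub_eq_left_of_degree_lt, hφ]
      rwa [degree_C_mul (hβ _), hφ]
    refine ⟨?_, by rw [hχ']; exact_mod_cast k.lt_succ_self⟩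
    have hXχ : (X * rightPoly α β (k + 1)).degree = ↑(k + 1) := by
      rw [degree_mul, degree_X, hχ', add_comm]; rfl
    rw [leftPoly_succ, degree_C_mul (inv_ne_zero (hβ _)), degree_sub_eq_left_of_degree_lt, hXχ]
    rw [degree_C_mul (hα _), hφ, hXχ]
    exact_mod_cast k.lt_succ_self

lemma natDegree_leftPoly (hα : ∀ j, α j ≠ 0) (hβ : ∀ j, β j ≠ 0) (k : ℕ) :
    (leftPoly α β k).natDegree = k :=
  natDegree_eq_of_degree_eq_some (degree_leftPoly_and_rightPoly hα hβ k).1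

section Matrix

variable {ι R : Type*} [Fintype ι] [DecidableEq ι] [CommRing R]

lemma aeval_C_mul_mulVec (M : Matrix ι ι R) (c : R) (p : R[X]) (v : ι → R) :
    aeval M (C c * p) *ᵥ v = c • (aeval M p *ᵥ v) := by
  rw [map_mul, aeval_C, Algebra.algebraMap_eq_smul_one, smul_mul_assoc, one_mul, smul_mulVec]

lemma aeval_X_mul_mulVec (M : Matrix ι ι R) (p : R[X]) (v : ι → R) :
    aeval M (X * p) *ᵥ v = M *ᵥ (aeval M p *ᵥ v) := by
  rw [map_mul, aeval_X, mulVec_mulVec]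

end Matrix

lemma eq_aeval_leftPoly_and_rightPoly {ι κ : Type*} [Fintype ι] [Fintype κ] [DecidableEq ι]
    (hα : ∀ j, α j ≠ 0) (hβ : ∀ j, β j ≠ 0) (A : Matrix ι κ K) (b : ι → K)
    (s : ℕ → ι → K) (w : ℕ → κ → K) (hw0 : w 0 = 0) (hs1 : β 1 • s 1 = b)
    (hwrec : ∀ j, 1 ≤ j → α j • w j = Aᵀ *ᵥ s j - β j • w (j - 1))
    (hsrec : ∀ j, 1 ≤ j → β (j + 1) • s (j + 1) = A *ᵥ w j - α j • s j) (k : ℕ) :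
    s (k + 1) = aeval (A * Aᵀ) (leftPoly α β k) *ᵥ b ∧
      w k = Aᵀ *ᵥ (aeval (A * Aᵀ) (rightPoly α β k) *ᵥ b) := by
  induction k with
  | zero =>
    refine ⟨?_, by simp [hw0]⟩
    rw [leftPoly_zero, ← mul_one (C _), aeval_C_mul_mulVec, map_one, one_mulVec, ← hs1,
      inv_smul_smul₀ (hβ 1)]
  | succ k ih =>
    obtain ⟨hs, hw⟩ := ih
    have hw' : w (k + 1) = Aᵀ *ᵥ (aeval (A * Aᵀ) (rightPoly α β (k + 1)) *ᵥ b) := by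
      have hrec := hwrec (k + 1) (by omega)
      rw [Nat.add_sub_cancel, hs, hw] at hrec
      rw [← inv_smul_smul₀ (hα (k + 1)) (w _), hrec, rightPoly_succ, aeval_C_mul_mulVec, map_sub,
        sub_mulVec, aeval_C_mul_mulVec, mulVec_smul, mulVec_sub, mulVec_smul]
    refine ⟨?_, hw'⟩
    have hrec := hsrec (k + 1) (by omega)
    rw [hw', hs, mulVec_mulVec] at hrec
    rw [← inv_smul_smul₀ (hβ (k + 2)) (s _), hrec, leftPoly_succ, aeval_C_mul_mulVec, map_sub,
      sub_mulVec, aeval_C_mul_mulVec, aeval_X_mul_mulVec]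

end GolubKahan

open GolubKahan in
theorem golub_kahan_left_lanczos_polynomials_general
    (m n : ℕ) (A : Matrix (Fin m) (Fin n) ℝ) (b : Fin m → ℝ)
    (α β : ℕ → ℝ) (hα : ∀ j, 0 < α j) (hβ : ∀ j, 0 < β j)
    (s : ℕ → (Fin m → ℝ)) (w : ℕ → (Fin n → ℝ))
    (hw0 : w 0 = 0)
    (hs1 : β 1 • s 1 = b)
    (hwrec : ∀ j, 1 ≤ j → α j • w j = Aᵀ.mulVec (s j) - β j • w (j - 1))
    (hsrec : ∀ j, 1 ≤ j → β (j + 1) • s (j + 1) = A.mulVec (w j) - α j • s j) :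
    ∀ k : ℕ, ∃ φ : Polynomial ℝ,
      φ.natDegree = k ∧
      s (k + 1) = (Polynomial.aeval (A * Aᵀ) φ).mulVec b ∧
      φ.coeff 0 = (-1 : ℝ) ^ k * (1 / β (k + 1)) * ∏ j ∈ Finset.Icc 1 k, α j / β j := by
  intro k
  have hα' : ∀ j, α j ≠ 0 := fun j => (hα j).ne'
  have hβ' : ∀ j, β j ≠ 0 := fun j => (hβ j).ne'
  exact ⟨leftPoly α β k, natDegree_leftPoly hα' hβ' k,
    (eq_aeval_leftPoly_and_rightPoly hα' hβ' A b s w hw0 hs1 hwrec hsrec k).1,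
    coeff_zero_leftPoly α β k⟩

/-- Golub-Kahan bidiagonalization vectors as Lanczos polynomials.
Under the recurrences, `s_{k+1} = φ_k(AAᵀ)b` for a polynomial `φ_k` of degree `k`
with constant term `φ_k(0) = (-1)^k (1/β_{k+1}) ∏_{j=1}^k (α_j/β_j)`. -/
theorem golub_kahan_left_lanczos_polynomials
    (m n : ℕ) (A : Matrix (Fin m) (Fin n) ℝ) (b : Fin m → ℝ) (hb : b ≠ 0)
    (α β : ℕ → ℝ) (hα : ∀ j, 0 < α j) (hβ : ∀ j, 0 < β j)
    (s : ℕ → (Fin m → ℝ)) (w : ℕ → (Fin n → ℝ))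
    (hw0 : w 0 = 0)
    (hβ1 : β 1 = Real.sqrt (∑ i, b i ^ 2))
    (hs1 : β 1 • s 1 = b)
    (hwrec : ∀ j, 1 ≤ j → α j • w j = Aᵀ.mulVec (s j) - β j • w (j - 1))
    (hsrec : ∀ j, 1 ≤ j → β (j + 1) • s (j + 1) = A.mulVec (w j) - α j • s j) :
    ∀ k : ℕ, ∃ φ : Polynomial ℝ,
      φ.natDegree = k ∧
      s (k + 1) = (Polynomial.aeval (A * Aᵀ) φ).mulVec b ∧
      φ.coeff 0 = (-1 : ℝ) ^ k * (1 / β (k + 1)) * ∏ j ∈ Finset.Icc 1 k, α j / β j :=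
  golub_kahan_left_lanczos_polynomials_general m n A b α β hα hβ s w hw0 hs1 hwrec hsrec
end

section
/- Under the Golub-Kahan recurrences (w₀ = 0, β₁ s₁ = b, α_k w_k = Aᵀ s_k − β_k w_{k-1}, β_{k+1} s_{k+1} = A w_k − α_k s_k with all α_k, β_k > 0), for every k ≥ 0 there exist polynomials ψ_k of degree k with w_{k+1} = ψ_k(AᵀA) Aᵀ b, and the constant terms satisfy ψ₀(0) = 1/(α₁β₁) and ψ_k(0) = (1/α_{k+1})(φ_k(0) − β_{k+1} ψ_{k-1}(0)) for k ≥ 1, where φ_k(0) = (-1)^k (1/β_{k+1}) ∏_{j=1}^k (α_j/β_j). -/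
/-!
Both bidiagonalization recurrences are three-term recurrences that only ever multiply the
previous vectors by `A` or `Aᵀ`. Since `Aᵀ p(AAᵀ) = p(AᵀA) Aᵀ` for every polynomial `p`, an
induction shows `s_{k+1} = φ_k(AAᵀ) b` and `w_{k+1} = ψ_k(AᵀA) Aᵀ b`, where `φ_k, ψ_k` obey the
same recurrences with `A` replaced by the indeterminate. Evaluating these polynomial recurrences
at `0` gives the constant terms; each step raises the degree by exactly one because the
coefficients `α_j, β_j` are nonzero.
-/

open Finset Matrix Polynomial

namespace Matrix

variable {l m R : Type*} [Fintype l] [Fintype m] [DecidableEq l] [DecidableEq m] [CommRing R]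

theorem mul_mul_pow_comm (A : Matrix l m R) (B : Matrix m l R) (k : ℕ) :
    B * (A * B) ^ k = (B * A) ^ k * B := by
  induction k with
  | zero => simp
  | succ k ih => rw [pow_succ, pow_succ, ← Matrix.mul_assoc B, ih, Matrix.mul_assoc,
      Matrix.mul_assoc, Matrix.mul_assoc]

theorem mul_aeval_mul_comm (A : Matrix l m R) (B : Matrix m l R) (p : R[X]) :
    B * aeval (A * B) p = aeval (B * A) p * B := by
  induction p using Polynomial.induction_on' with
  | add p q hp hq => simp only [map_add, Matrix.mul_add, Matrix.add_mul, hp, hq]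
  | monomial k a =>
    simp only [aeval_monomial, Algebra.algebraMap_eq_smul_one, Matrix.smul_mul, Matrix.mul_smul,
      Matrix.one_mul, mul_mul_pow_comm]

theorem mulVec_aeval_mul_mulVec (A : Matrix l m R) (B : Matrix m l R) (p : R[X]) (v : l → R) :
    B *ᵥ (aeval (A * B) p *ᵥ v) = aeval (B * A) p *ᵥ (B *ᵥ v) := by
  rw [mulVec_mulVec, mulVec_mulVec, mul_aeval_mul_comm]

theorem aeval_C_mul_sub_C_mul_mulVec (M : Matrix l l R) (a c : R) (p q : R[X]) (v : l → R) :
    aeval M (C a * (p - C c * q)) *ᵥ v = a • (aeval M p *ᵥ v - c • (aeval M q *ᵥ v)) := by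
  simp only [map_mul, map_sub, aeval_C, ← Algebra.smul_def, smul_mulVec, sub_mulVec]

end Matrix

namespace Polynomial

theorem degree_C_mul_sub_C_mul {K : Type*} [Field K] {a c : K} {p q : K[X]} (ha : a ≠ 0)
    (h : q.degree < p.degree) : (C a * (p - C c * q)).degree = p.degree := by
  have hq : (C c * q).degree < p.degree := by
    rw [← smul_eq_C_mul]
    exact (degree_smul_le c q).trans_lt h
  rw [degree_C_mul ha, degree_sub_eq_left_of_degree_lt hq]

end Polynomial

section GolubKahan

variable {K : Type*} [Field K]

/-- `lanczosPolys α β k = (φ_k, ψ_k)`: the polynomials with `s_{k+1} = φ_k(AAᵀ) b` and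
`w_{k+1} = ψ_k(AᵀA) Aᵀ b`, obtained from the bidiagonalization recurrences by replacing the
matrix by the indeterminate. -/
noncomputable def lanczosPolys (α β : ℕ → K) : ℕ → K[X] × K[X]
  | 0 => (C (β 1)⁻¹, C (α 1 * β 1)⁻¹)
  | k + 1 =>
    let (φ, ψ) := lanczosPolys α β k
    let φ' := C (β (k + 2))⁻¹ * (X * ψ - C (α (k + 1)) * φ)
    (φ', C (α (k + 2))⁻¹ * (φ' - C (β (k + 2)) * ψ))

noncomputable def leftLanczosPoly (α β : ℕ → K) (k : ℕ) : K[X] := (lanczosPolys α β k).1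

noncomputable def rightLanczosPoly (α β : ℕ → K) (k : ℕ) : K[X] := (lanczosPolys α β k).2

variable (α β : ℕ → K)

theorem leftLanczosPoly_zero : leftLanczosPoly α β 0 = C (β 1)⁻¹ := rfl

theorem rightLanczosPoly_zero : rightLanczosPoly α β 0 = C (α 1 * β 1)⁻¹ := rfl

theorem leftLanczosPoly_succ (k : ℕ) :
    leftLanczosPoly α β (k + 1) = C (β (k + 2))⁻¹ *
      (X * rightLanczosPoly α β k - C (α (k + 1)) * leftLanczosPoly α β k) := rfl

theorem rightLanczosPoly_succ (k : ℕ) :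
    rightLanczosPoly α β (k + 1) = C (α (k + 2))⁻¹ *
      (leftLanczosPoly α β (k + 1) - C (β (k + 2)) * rightLanczosPoly α β k) := rfl

theorem rightLanczosPoly_succ_coeff_zero (k : ℕ) :
    (rightLanczosPoly α β (k + 1)).coeff 0 = (α (k + 2))⁻¹ *
      ((leftLanczosPoly α β (k + 1)).coeff 0 - β (k + 2) * (rightLanczosPoly α β k).coeff 0) := by
  simp only [rightLanczosPoly_succ, mul_coeff_zero, coeff_sub, coeff_C_zero]

variable {α β}

theorem degree_leftLanczosPoly_and_rightLanczosPoly (hα : ∀ j, α j ≠ 0) (hβ : ∀ j, β j ≠ 0)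
    (k : ℕ) :
    (leftLanczosPoly α β k).degree = k ∧ (rightLanczosPoly α β k).degree = k := by
  induction k with
  | zero =>
    simp [leftLanczosPoly_zero, rightLanczosPoly_zero, hα, hβ]
  | succ k ih =>
    have hlt : (k : WithBot ℕ) < ((k + 1 : ℕ) : WithBot ℕ) := by exact_mod_cast k.lt_succ_self
    have hXψ : (X * rightLanczosPoly α β k).degree = ((k + 1 : ℕ) : WithBot ℕ) := by
      rw [X_mul, degree_mul_X, ih.2, Nat.cast_succ]
    have hφ : (leftLanczosPoly α β (k + 1)).degree = ((k + 1 : ℕ) : WithBot ℕ) := by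
      rw [leftLanczosPoly_succ,
        degree_C_mul_sub_C_mul (inv_ne_zero (hβ _)) (by rwa [hXψ, ih.1]), hXψ]
    refine ⟨hφ, ?_⟩
    rw [rightLanczosPoly_succ,
      degree_C_mul_sub_C_mul (inv_ne_zero (hα _)) (by rwa [hφ, ih.2]), hφ]

theorem natDegree_rightLanczosPoly (hα : ∀ j, α j ≠ 0) (hβ : ∀ j, β j ≠ 0) (k : ℕ) :
    (rightLanczosPoly α β k).natDegree = k :=
  natDegree_eq_of_degree_eq_some (degree_leftLanczosPoly_and_rightLanczosPoly hα hβ k).2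

variable {l m : Type*} [Fintype l] [Fintype m] [DecidableEq l] [DecidableEq m]

theorem bidiagonalization_eq_aeval_lanczosPolys (A : Matrix l m K) (B : Matrix m l K)
    (b : l → K) (hα : ∀ j, α j ≠ 0) (hβ : ∀ j, β j ≠ 0) (s : ℕ → l → K) (w : ℕ → m → K)
    (hw0 : w 0 = 0) (hs1 : β 1 • s 1 = b)
    (hwrec : ∀ j, 1 ≤ j → α j • w j = B *ᵥ s j - β j • w (j - 1))
    (hsrec : ∀ j, 1 ≤ j → β (j + 1) • s (j + 1) = A *ᵥ w j - α j • s j) (k : ℕ) :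
    s (k + 1) = aeval (A * B) (leftLanczosPoly α β k) *ᵥ b ∧
      w (k + 1) = aeval (B * A) (rightLanczosPoly α β k) *ᵥ (B *ᵥ b) := by
  induction k with
  | zero =>
    have hs : s 1 = (β 1)⁻¹ • b := (eq_inv_smul_iff₀ (hβ 1)).2 hs1
    have hw : w 1 = (α 1)⁻¹ • (B *ᵥ s 1) :=
      (eq_inv_smul_iff₀ (hα 1)).2 (by simpa [hw0] using hwrec 1 le_rfl)
    simp only [leftLanczosPoly_zero, rightLanczosPoly_zero, aeval_C,
      Algebra.algebraMap_eq_smul_one, smul_mulVec, one_mulVec, hs, hw, mulVec_smul, smul_smul,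
      mul_inv, and_self]
  | succ k ih =>
    have hs : s (k + 2) = (β (k + 2))⁻¹ • (A *ᵥ w (k + 1) - α (k + 1) • s (k + 1)) :=
      (eq_inv_smul_iff₀ (hβ _)).2 (hsrec (k + 1) (Nat.le_add_left 1 k))
    have hw : w (k + 2) = (α (k + 2))⁻¹ • (B *ᵥ s (k + 2) - β (k + 2) • w (k + 1)) :=
      (eq_inv_smul_iff₀ (hα _)).2 (hwrec (k + 2) (by omega))
    have hs' : s (k + 2) = aeval (A * B) (leftLanczosPoly α β (k + 1)) *ᵥ b := by
      rw [hs, ih.1, ih.2, leftLanczosPoly_succ, aeval_C_mul_sub_C_mul_mulVec,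
        mulVec_aeval_mul_mulVec, X_mul, map_mul, aeval_X, ← mulVec_mulVec, ← mulVec_mulVec]
    refine ⟨hs', ?_⟩
    rw [hw, hs', ih.2, rightLanczosPoly_succ, aeval_C_mul_sub_C_mul_mulVec,
      mulVec_aeval_mul_mulVec]

end GolubKahan

theorem leftLanczosPoly_coeff_zero (α β : ℕ → ℝ) (k : ℕ) :
    (leftLanczosPoly α β k).coeff 0 = phi α β k := by
  induction k with
  | zero => simp [leftLanczosPoly_zero, phi]
  | succ k ih =>
    simp only [leftLanczosPoly_succ, mul_coeff_zero, coeff_sub, coeff_C_zero, coeff_X_zero, ih,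
      phi, prod_Icc_succ_top (Nat.le_add_left 1 k)]
    ring

theorem golub_kahan_right_lanczos_polynomials_general
    (m n : ℕ) (A : Matrix (Fin m) (Fin n) ℝ) (b : Fin m → ℝ)
    (α β : ℕ → ℝ) (hα : ∀ j, 0 < α j) (hβ : ∀ j, 0 < β j)
    (s : ℕ → (Fin m → ℝ)) (w : ℕ → (Fin n → ℝ))
    (hw0 : w 0 = 0)
    (hs1 : β 1 • s 1 = b)
    (hwrec : ∀ j, 1 ≤ j → α j • w j = Aᵀ.mulVec (s j) - β j • w (j - 1))
    (hsrec : ∀ j, 1 ≤ j → β (j + 1) • s (j + 1) = A.mulVec (w j) - α j • s j) :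
    ∃ ψ : ℕ → Polynomial ℝ,
      (∀ k, (ψ k).natDegree = k ∧
        w (k + 1) = (Polynomial.aeval (Aᵀ * A) (ψ k)).mulVec (Aᵀ.mulVec b)) ∧
      (ψ 0).coeff 0 = 1 / (α 1 * β 1) ∧
      (∀ k, 1 ≤ k → (ψ k).coeff 0 =
        (1 / α (k + 1)) * (phi α β k - β (k + 1) * (ψ (k - 1)).coeff 0)) := by
  have hα' : ∀ j, α j ≠ 0 := fun j => (hα j).ne'
  have hβ' : ∀ j, β j ≠ 0 := fun j => (hβ j).ne'
  refine ⟨rightLanczosPoly α β, fun k => ⟨natDegree_rightLanczosPoly hα' hβ' k,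
    (bidiagonalization_eq_aeval_lanczosPolys A Aᵀ b hα' hβ' s w hw0 hs1 hwrec hsrec k).2⟩,
    by simp [rightLanczosPoly_zero], ?_⟩
  rintro (_ | k) hk
  · omega
  · rw [rightLanczosPoly_succ_coeff_zero, leftLanczosPoly_coeff_zero, one_div, Nat.add_sub_cancel]

/-- Golub-Kahan right bidiagonalization vectors as Lanczos polynomials.
Under the recurrences, `w_{k+1} = ψ_k(AᵀA)Aᵀb` for polynomials `ψ_k` of degree `k`
with `ψ₀(0) = 1/(α₁β₁)` and `ψ_k(0) = (1/α_{k+1})(φ_k(0) - β_{k+1}ψ_{k-1}(0))`. -/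
theorem golub_kahan_right_lanczos_polynomials
    (m n : ℕ) (A : Matrix (Fin m) (Fin n) ℝ) (b : Fin m → ℝ) (hb : b ≠ 0)
    (α β : ℕ → ℝ) (hα : ∀ j, 0 < α j) (hβ : ∀ j, 0 < β j)
    (s : ℕ → (Fin m → ℝ)) (w : ℕ → (Fin n → ℝ))
    (hw0 : w 0 = 0)
    (hβ1 : β 1 = Real.sqrt (∑ i, b i ^ 2))
    (hs1 : β 1 • s 1 = b)
    (hwrec : ∀ j, 1 ≤ j → α j • w j = Aᵀ.mulVec (s j) - β j • w (j - 1))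
    (hsrec : ∀ j, 1 ≤ j → β (j + 1) • s (j + 1) = A.mulVec (w j) - α j • s j) :
    ∃ ψ : ℕ → Polynomial ℝ,
      (∀ k, (ψ k).natDegree = k ∧
        w (k + 1) = (Polynomial.aeval (Aᵀ * A) (ψ k)).mulVec (Aᵀ.mulVec b)) ∧
      (ψ 0).coeff 0 = 1 / (α 1 * β 1) ∧
      (∀ k, 1 ≤ k → (ψ k).coeff 0 =
        (1 / α (k + 1)) * (phi α β k - β (k + 1) * (ψ (k - 1)).coeff 0)) :=
  golub_kahan_right_lanczos_polynomials_general m n A b α β hα hβ s w hw0 hs1 hwrec hsrec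
end
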